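/- arXiv:2205.04994 — 4 statements merged into one kernel-verified Lean document; each statement's English description precedes it below -/
import Mathlib

section
/- At most one of the two angles t + 1/3 and t − 1/3 can be periodic under the tripling map, for any t ∈ ℝ/ℤ. -/
/-!
Both angles would be fixed by a common iterate `3 ^ N` (`N ≥ 1`), which also kills `1/3`.
Then `3 ^ N` fixes their difference `2/3` while annihilating it, so `2/3 = 0`,
contradicting that `1/3` has additive order `3`.
-/

open Function

lemma two_nsmul_eq_zero_of_nsmul_add_eq_of_nsmul_sub_eq {G : Type*} [AddCommGroup G] {a : ℕ}
    {t c : G} (hc : a • c = 0) (hadd : a • (t + c) = t + c) (hsub : a • (t - c) = t - c) :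
    2 • c = 0 := by
  have hdiff : a • (2 • c) = 2 • c := by
    calc a • (2 • c) = a • (t + c) - a • (t - c) := by rw [← nsmul_sub, two_nsmul]; abel_nf
      _ = 2 • c := by rw [hadd, hsub]; abel
  rwa [smul_comm, hc, nsmul_zero, eq_comm] at hdiff

lemma isPeriodicPt_nsmul_iff {G : Type*} [AddMonoid G] (a n : ℕ) (x : G) :
    IsPeriodicPt (a • ·) n x ↔ a ^ n • x = x := by
  rw [IsPeriodicPt, IsFixedPt, smul_iterate_apply]

lemma addOrderOf_coe_one_third : addOrderOf ((1 / 3 : ℝ) : UnitAddCircle) = 3 := by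
  simpa using AddCircle.addOrderOf_period_div (p := (1 : ℝ)) (n := 3) (by norm_num)

/-- For any `t ∈ ℝ/ℤ`, at most one of `t + 1/3` and `t - 1/3` is periodic
under the tripling map. -/
theorem at_most_one_shift_periodic (t : UnitAddCircle) :
    ¬ ((∃ n : ℕ, 1 ≤ n ∧ (3 ^ n : ℕ) • (t + ((1 / 3 : ℝ) : UnitAddCircle))
          = t + ((1 / 3 : ℝ) : UnitAddCircle)) ∧
       (∃ n : ℕ, 1 ≤ n ∧ (3 ^ n : ℕ) • (t - ((1 / 3 : ℝ) : UnitAddCircle))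
          = t - ((1 / 3 : ℝ) : UnitAddCircle))) := by
  rintro ⟨⟨n, hn, hadd⟩, ⟨m, hm, hsub⟩⟩
  set c : UnitAddCircle := ((1 / 3 : ℝ) : UnitAddCircle)
  have hadd' := ((isPeriodicPt_nsmul_iff 3 n _).2 hadd).mul_const m
  have hsub' := ((isPeriodicPt_nsmul_iff 3 m _).2 hsub).const_mul n
  rw [isPeriodicPt_nsmul_iff] at hadd' hsub'
  have hc : 3 ^ (n * m) • c = 0 := by
    rw [← addOrderOf_dvd_iff_nsmul_eq_zero, addOrderOf_coe_one_third]
    exact dvd_pow_self 3 (by positivity)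
  have h2c := two_nsmul_eq_zero_of_nsmul_add_eq_of_nsmul_sub_eq hc hadd' hsub'
  rw [← addOrderOf_dvd_iff_nsmul_eq_zero, addOrderOf_coe_one_third] at h2c
  omega
end

section
/- Let P be the smallest collection of unordered pairs of angles in ℝ/ℤ containing {1/3, 2/3} and closed under the two operations {s, t} ↦ {s/2, t/2 + 1/2} and {s, t} ↦ {s/2 + 1/2, t/2}. Then every basilica angle belongs to at least one pair in P. -/
/-- Halving using the canonical representative in `[0,1)`. -/
noncomputable def half (t : UnitAddCircle) : UnitAddCircle :=
  ((((AddCircle.equivIco 1 0) t : ℝ) / 2 : ℝ) : UnitAddCircle)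

/-- `basPair s t` means the unordered pair `{s, t}` belongs to the smallest collection
of unordered pairs of angles containing `{1/3, 2/3}` and closed under
`{s, t} ↦ {s/2, t/2 + 1/2}` and `{s, t} ↦ {s/2 + 1/2, t/2}`
(the leaves of the basilica lamination). -/
inductive basPair : UnitAddCircle → UnitAddCircle → Prop
  | base : basPair ((1 / 3 : ℝ) : UnitAddCircle) ((2 / 3 : ℝ) : UnitAddCircle)
  | symm {s t : UnitAddCircle} : basPair s t → basPair t s
  | op1 {s t : UnitAddCircle} : basPair s t →
      basPair (half s) (half t + ((1 / 2 : ℝ) : UnitAddCircle))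
  | op2 {s t : UnitAddCircle} : basPair s t →
      basPair (half s + ((1 / 2 : ℝ) : UnitAddCircle)) (half t)

/-! Each angle `t` is one of the two halves `half (2 • t)`, `half (2 • t) + 1/2` of its double,
so one of the two operations pulls a leaf through `2 • t` back to a leaf through `t`. Induction on
the number of doublings that take a basilica angle to `1/3` then ends at the leaf `{1/3, 2/3}`. -/

open Set

lemma half_coe_of_mem_Ico {x : ℝ} (hx : x ∈ Ico (0 : ℝ) 1) :
    half x = ((x / 2 : ℝ) : UnitAddCircle) := by
  rw [half, AddCircle.equivIco_coe_of_mem (by simpa using hx)]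

lemma eq_half_two_nsmul_or_eq_half_two_nsmul_add_half (t : UnitAddCircle) :
    t = half (2 • t) ∨ t = half (2 • t) + ((1 / 2 : ℝ) : UnitAddCircle) := by
  obtain ⟨x, ⟨hx0, hx1⟩, rfl⟩ := AddCircle.eq_coe_Ico t
  rw [← AddCircle.coe_nsmul, nsmul_eq_mul, Nat.cast_ofNat]
  rcases lt_or_ge x (1 / 2) with hx | hx
  · left
    rw [half_coe_of_mem_Ico ⟨by positivity, by linarith⟩, mul_div_cancel_left₀ x two_ne_zero]
  · right
    have hwrap : ((2 * x : ℝ) : UnitAddCircle) = ((2 * x - 1 : ℝ) : UnitAddCircle) := by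
      rw [AddCircle.coe_sub, AddCircle.coe_period, sub_zero]
    rw [hwrap, half_coe_of_mem_Ico ⟨by linarith, by linarith⟩, ← AddCircle.coe_add]
    congr 1
    ring

lemma exists_basPair_of_exists_basPair_two_nsmul {t : UnitAddCircle}
    (h : ∃ s, basPair (2 • t) s) : ∃ s, basPair t s := by
  obtain ⟨s, hs⟩ := h
  rcases eq_half_two_nsmul_or_eq_half_two_nsmul_add_half t with ht | ht
  · rw [ht]; exact ⟨_, hs.op1⟩
  · rw [ht]; exact ⟨_, hs.op2⟩

/-- Every basilica angle belongs to at least one leaf of the basilica lamination. -/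
theorem basilica_angle_mem_pair (t : UnitAddCircle)
    (hbas : ∃ n : ℕ, (2 ^ n : ℕ) • t = ((1 / 3 : ℝ) : UnitAddCircle)) :
    ∃ s : UnitAddCircle, basPair t s := by
  obtain ⟨n, hn⟩ := hbas
  induction n generalizing t with
  | zero =>
    rw [pow_zero, one_smul] at hn
    exact ⟨_, hn ▸ basPair.base⟩
  | succ n ih =>
    refine exists_basPair_of_exists_basPair_two_nsmul (ih (2 • t) ?_)
    rw [← hn, ← mul_smul, ← pow_succ]
end

section
/- Let P be the smallest collection of unordered pairs of angles in ℝ/ℤ containing {1/3, 2/3} and closed under {s, t} ↦ {s/2, t/2 + 1/2} and {s, t} ↦ {s/2 + 1/2, t/2}. Then every basilica angle t belongs to exactly one pair of P; i.e., there is a unique t̃ ≠ t such that {t, t̃} ∈ P. -/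
/-!
The partner of `t` is `-t`. Halving commutes with negation up to the half-turn:
`half (-s) = -(half s + 1/2)` for `s ≠ 0`, so both operations send a leaf `{s, -s}` to a leaf
of the same shape, and no member of a leaf is killed by doubling; hence every leaf is `{s, -s}`
with `s ≠ -s`. Conversely, if `2^(n+1) t = 1/3`, then `t` is one of the two halves `half (2t)`,
`half (2t) + 1/2` of `2t`, so one of the two operations turns the leaf `{2t, -2t}` given by
induction on `n` into `{t, -t}`.
-/

lemma half_coe {x : ℝ} (hx : x ∈ Set.Ico 0 1) : half x = ((x / 2 : ℝ) : UnitAddCircle) := by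
  rw [half, AddCircle.equivIco_coe_of_mem (by rwa [zero_add])]

lemma two_nsmul_half (t : UnitAddCircle) : 2 • half t = t := by
  rw [half, ← AddCircle.coe_nsmul, nsmul_eq_mul, Nat.cast_ofNat, mul_div_cancel₀ _ two_ne_zero,
    AddCircle.coe_equivIco]

lemma half_neg {t : UnitAddCircle} (ht : t ≠ 0) :
    half (-t) = -(half t + ((1 / 2 : ℝ) : UnitAddCircle)) := by
  obtain ⟨x, hx, rfl⟩ := AddCircle.eq_coe_Ico t
  have hx0 : x ≠ 0 := by rintro rfl; exact ht (AddCircle.coe_zero 1)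
  have hneg : -(x : UnitAddCircle) = ((1 - x : ℝ) : UnitAddCircle) := by
    rw [AddCircle.coe_sub, AddCircle.coe_period, zero_sub]
  have hx' : 1 - x ∈ Set.Ico (0 : ℝ) 1 :=
    ⟨by linarith [hx.2], sub_lt_self 1 (hx.1.lt_of_ne' hx0)⟩
  rw [hneg, half_coe hx', half_coe hx, ← AddCircle.coe_add,
    ← AddCircle.coe_neg, ← sub_eq_zero, ← AddCircle.coe_sub,
    show (1 - x) / 2 - -(x / 2 + 1 / 2) = (1 : ℝ) by ring, AddCircle.coe_period]

lemma eq_half_or_eq_half_add_of_two_nsmul_eq {x s : UnitAddCircle} (h : 2 • x = s) :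
    x = half s ∨ x = half s + ((1 / 2 : ℝ) : UnitAddCircle) := by
  have htorsion : 2 • (x - half s) = 0 := by rw [nsmul_sub, h, two_nsmul_half, sub_self]
  obtain ⟨m, hm, hxm⟩ := (AddCircle.nsmul_eq_zero_iff two_pos).1 htorsion
  interval_cases m
  · left; simpa [sub_eq_zero, eq_comm] using hxm
  · right; rw [← sub_eq_iff_eq_add', ← hxm]; norm_num

lemma two_nsmul_coe_half : 2 • ((1 / 2 : ℝ) : UnitAddCircle) = 0 := by
  rw [← AddCircle.coe_nsmul, nsmul_eq_mul]; norm_num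

lemma two_nsmul_half_add_coe_half (t : UnitAddCircle) :
    2 • (half t + ((1 / 2 : ℝ) : UnitAddCircle)) = t := by
  rw [smul_add, two_nsmul_half, two_nsmul_coe_half, add_zero]

lemma neg_coe_third : -((1 / 3 : ℝ) : UnitAddCircle) = ((2 / 3 : ℝ) : UnitAddCircle) := by
  rw [← AddCircle.coe_neg, ← sub_eq_zero, ← AddCircle.coe_sub,
    show -(1 / 3) - 2 / 3 = -(1 : ℝ) by norm_num, AddCircle.coe_neg, AddCircle.coe_period,
    neg_zero]

lemma two_nsmul_coe_third_ne_zero : 2 • ((1 / 3 : ℝ) : UnitAddCircle) ≠ 0 := by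
  rw [← AddCircle.coe_nsmul, Ne, AddCircle.coe_eq_zero_iff_of_mem_Ico] <;> norm_num

namespace basPair

lemma two_nsmul_ne_zero {s t : UnitAddCircle} (h : basPair s t) :
    2 • s ≠ 0 ∧ 2 • t ≠ 0 := by
  induction h with
  | base =>
    refine ⟨two_nsmul_coe_third_ne_zero, ?_⟩
    rw [← neg_coe_third, smul_neg, neg_ne_zero]
    exact two_nsmul_coe_third_ne_zero
  | symm _ ih => exact ih.symm
  | op1 _ ih =>
    rw [two_nsmul_half, two_nsmul_half_add_coe_half]
    exact ⟨right_ne_zero_of_smul ih.1, right_ne_zero_of_smul ih.2⟩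
  | op2 _ ih =>
    rw [two_nsmul_half, two_nsmul_half_add_coe_half]
    exact ⟨right_ne_zero_of_smul ih.1, right_ne_zero_of_smul ih.2⟩

lemma left_ne_zero {s t : UnitAddCircle} (h : basPair s t) : s ≠ 0 :=
  right_ne_zero_of_smul h.two_nsmul_ne_zero.1

lemma eq_neg {s t : UnitAddCircle} (h : basPair s t) : t = -s := by
  induction h with
  | base => exact neg_coe_third.symm
  | symm _ ih => rw [ih, neg_neg]
  | op1 h ih => rw [ih, half_neg h.left_ne_zero, neg_add, neg_add_cancel_right]
  | op2 h ih => rw [ih, half_neg h.left_ne_zero]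

end basPair

lemma basPair_neg_of_two_nsmul_eq {s x : UnitAddCircle} (hs : basPair s (-s)) (hx : 2 • x = s) :
    basPair x (-x) := by
  rcases eq_half_or_eq_half_add_of_two_nsmul_eq hx with rfl | rfl
  · have h := hs.op1
    rwa [half_neg hs.left_ne_zero, neg_add, neg_add_cancel_right] at h
  · simpa only [half_neg hs.left_ne_zero] using hs.op2

lemma basPair_neg_of_two_pow_nsmul_eq_coe_third {n : ℕ} {t : UnitAddCircle}
    (ht : (2 ^ n : ℕ) • t = ((1 / 3 : ℝ) : UnitAddCircle)) : basPair t (-t) := by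
  induction n generalizing t with
  | zero =>
    rw [pow_zero, one_smul] at ht
    rw [ht, neg_coe_third]
    exact basPair.base
  | succ n ih =>
    rw [pow_succ, mul_smul] at ht
    exact basPair_neg_of_two_nsmul_eq (ih ht) rfl

/-- Every basilica angle `t` has a unique partner `t̃ ≠ t` with `{t, t̃}` a leaf of
the basilica lamination. -/
theorem basilica_angle_unique_partner (t : UnitAddCircle)
    (hbas : ∃ n : ℕ, (2 ^ n : ℕ) • t = ((1 / 3 : ℝ) : UnitAddCircle)) :
    ∃! tt : UnitAddCircle, tt ≠ t ∧ basPair t tt := by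
  obtain ⟨n, hn⟩ := hbas
  have ht := basPair_neg_of_two_pow_nsmul_eq_coe_third hn
  have hne : -t ≠ t := by
    rw [Ne, neg_eq_iff_add_eq_zero, ← two_nsmul]
    exact ht.two_nsmul_ne_zero.1
  exact ⟨-t, ⟨hne, ht⟩, fun _ htt => htt.2.eq_neg⟩
end

section
/- Let P be the smallest collection of unordered pairs of angles in ℝ/ℤ containing {1/3, 2/3} and closed under {s, t} ↦ {s/2, t/2 + 1/2} and {s, t} ↦ {s/2 + 1/2, t/2}. Then for every pair {s, t} ∈ P other than {1/3, 2/3}, either both s and t lie in the open arc (1/3, 2/3), or both lie in the open arc (2/3, 4/3) (taken mod 1). In particular, no leaf of the basilica lamination crosses the minor leaf {1/3, 2/3}. -/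
open Set

noncomputable def angleRep (t : UnitAddCircle) : ℝ :=
  AddCircle.equivIco 1 0 t

lemma angleRep_mem_Ico (t : UnitAddCircle) : angleRep t ∈ Ico (0 : ℝ) 1 := by
  rw [← zero_add (1 : ℝ)]
  exact (AddCircle.equivIco 1 0 t).2

lemma coe_angleRep (t : UnitAddCircle) : (angleRep t : UnitAddCircle) = t :=
  AddCircle.coe_equivIco

lemma angleRep_coe {x : ℝ} (hx : x ∈ Ico (0 : ℝ) 1) : angleRep x = x :=
  AddCircle.equivIco_coe_of_mem (by rwa [zero_add])

lemma half_eq_coe (t : UnitAddCircle) : half t = ((angleRep t / 2 : ℝ) : UnitAddCircle) :=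
  rfl

lemma angleRep_half (t : UnitAddCircle) : angleRep (half t) = angleRep t / 2 := by
  rw [half_eq_coe]
  apply angleRep_coe
  obtain ⟨h0, h1⟩ := angleRep_mem_Ico t
  constructor <;> linarith

lemma angleRep_half_add_half (t : UnitAddCircle) :
    angleRep (half t + ((1 / 2 : ℝ) : UnitAddCircle)) = angleRep t / 2 + 1 / 2 := by
  rw [half_eq_coe, ← AddCircle.coe_add]
  apply angleRep_coe
  obtain ⟨h0, h1⟩ := angleRep_mem_Ico t
  constructor <;> linarith

def LeafRegion (x y : ℝ) : Prop :=
  (x = 1 / 3 ∧ y = 2 / 3) ∨ (x = 2 / 3 ∧ y = 1 / 3) ∨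
  (x ∈ Ioo (1 / 3) (2 / 3) ∧ y ∈ Ioo (1 / 3) (2 / 3)) ∨
  (x ∈ Ioo (2 / 3) 1 ∧ y ∈ Ico 0 (1 / 3)) ∨
  (x ∈ Ico 0 (1 / 3) ∧ y ∈ Ioo (2 / 3) 1)

namespace LeafRegion

variable {x y : ℝ}

lemma symm (h : LeafRegion x y) : LeafRegion y x := by
  unfold LeafRegion at *
  tauto

lemma op1 (h : LeafRegion x y) : LeafRegion (x / 2) (y / 2 + 1 / 2) := by
  simp only [LeafRegion, mem_Ioo, mem_Ico] at h ⊢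
  rcases h with ⟨rfl, rfl⟩ | ⟨rfl, rfl⟩ | ⟨⟨hx, hx'⟩, hy, hy'⟩ | ⟨⟨hx, hx'⟩, hy, hy'⟩ |
    ⟨⟨hx, hx'⟩, hy, hy'⟩
  · norm_num
  · norm_num
  · refine .inr <| .inr <| .inr <| .inr ⟨⟨?_, ?_⟩, ?_, ?_⟩ <;> linarith
  · refine .inr <| .inr <| .inl ⟨⟨?_, ?_⟩, ?_, ?_⟩ <;> linarith
  · refine .inr <| .inr <| .inr <| .inr ⟨⟨?_, ?_⟩, ?_, ?_⟩ <;> linarith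

lemma op2 (h : LeafRegion x y) : LeafRegion (x / 2 + 1 / 2) (y / 2) :=
  h.symm.op1.symm

end LeafRegion

lemma basPair.leafRegion {s t : UnitAddCircle} (h : basPair s t) :
    LeafRegion (angleRep s) (angleRep t) := by
  induction h with
  | base =>
    rw [angleRep_coe ⟨by norm_num, by norm_num⟩, angleRep_coe ⟨by norm_num, by norm_num⟩]
    exact Or.inl ⟨rfl, rfl⟩
  | symm _ ih => exact ih.symm
  | op1 _ ih => rw [angleRep_half, angleRep_half_add_half]; exact ih.op1
  | op2 _ ih => rw [angleRep_half, angleRep_half_add_half]; exact ih.op2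

lemma coe_mem_image_Ioo_two_thirds_four_thirds {x : ℝ}
    (hx : x ∈ Ioo (2 / 3) 1 ∪ Ico 0 (1 / 3)) :
    (x : UnitAddCircle) ∈ (fun x : ℝ => ((x : UnitAddCircle))) '' Ioo (2 / 3) (4 / 3) := by
  rcases hx with ⟨h0, h1⟩ | ⟨h0, h1⟩
  · exact ⟨x, ⟨h0, by linarith⟩, rfl⟩
  · exact ⟨x + 1, ⟨by linarith, by linarith⟩, AddCircle.coe_add_period 1 x⟩

/-- Every leaf of the basilica lamination other than the minor leaf `{1/3, 2/3}` has
both endpoints in the open arc `(1/3, 2/3)` or both in the open arc `(2/3, 4/3)`. -/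
theorem basilica_pair_does_not_cross_minor_leaf (s t : UnitAddCircle)
    (hst : basPair s t)
    (hne : ¬ ((s = ((1 / 3 : ℝ) : UnitAddCircle) ∧ t = ((2 / 3 : ℝ) : UnitAddCircle)) ∨
      (s = ((2 / 3 : ℝ) : UnitAddCircle) ∧ t = ((1 / 3 : ℝ) : UnitAddCircle)))) :
    (s ∈ (fun x : ℝ => ((x : UnitAddCircle))) '' Set.Ioo (1 / 3) (2 / 3) ∧
      t ∈ (fun x : ℝ => ((x : UnitAddCircle))) '' Set.Ioo (1 / 3) (2 / 3)) ∨
    (s ∈ (fun x : ℝ => ((x : UnitAddCircle))) '' Set.Ioo (2 / 3) (4 / 3) ∧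
      t ∈ (fun x : ℝ => ((x : UnitAddCircle))) '' Set.Ioo (2 / 3) (4 / 3)) := by
  rw [← coe_angleRep s, ← coe_angleRep t] at hne ⊢
  rcases hst.leafRegion with ⟨hs, ht⟩ | ⟨hs, ht⟩ | ⟨hs, ht⟩ | ⟨hs, ht⟩ | ⟨hs, ht⟩
  · exact absurd (Or.inl ⟨by rw [hs], by rw [ht]⟩) hne
  · exact absurd (Or.inr ⟨by rw [hs], by rw [ht]⟩) hne
  · exact Or.inl ⟨⟨_, hs, rfl⟩, ⟨_, ht, rfl⟩⟩
  · exact Or.inr ⟨coe_mem_image_Ioo_two_thirds_four_thirds (Or.inl hs),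
      coe_mem_image_Ioo_two_thirds_four_thirds (Or.inr ht)⟩
  · exact Or.inr ⟨coe_mem_image_Ioo_two_thirds_four_thirds (Or.inr hs),
      coe_mem_image_Ioo_two_thirds_four_thirds (Or.inl ht)⟩
end
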